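/- Let K be a valued field, B₀ ⊆ Kⁿ a ball, and let C = B₁ ∪ … ∪ B_m ⊆ B₀ and C' = B'₁ ∪ … ∪ B'_m ⊆ B₀ each be a union of finitely many pairwise disjoint points and balls. Then there exists a risometry φ : B₀ → B₀ with φ(Bᵢ) = B'ᵢ for each i if and only if (a) for each i, Bᵢ and B'ᵢ have the same cut-radius, i.e. {|x − y| : x, y ∈ Bᵢ} = {|x − y| : x, y ∈ B'ᵢ}, and (b) for each i ≠ j, rv(Bᵢ − Bⱼ) = rv(B'ᵢ − B'ⱼ), where rv(Bᵢ − Bⱼ) denotes the common leading-term value rv⁽ⁿ⁾(x − x') for x ∈ Bᵢ, x' ∈ Bⱼ. -/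

import Mathlib

/-- The sup-norm on `Kⁿ` induced by a valuation `v : K → Γ₀`. -/
noncomputable def supVal {K Γ₀ : Type*} [Field K] [LinearOrderedCommGroupWithZero Γ₀]
    (v : Valuation K Γ₀) {n : ℕ} (x : Fin n → K) : Γ₀ :=
  letI : OrderBot Γ₀ := { bot := 0, bot_le := fun _ => zero_le' }
  Finset.univ.sup fun i => v (x i)

/-- A (valuative) ball in `Kⁿ` with respect to the sup-norm. -/
def IsBall {K Γ₀ : Type*} [Field K] [LinearOrderedCommGroupWithZero Γ₀]
    (v : Valuation K Γ₀) {n : ℕ} (B : Set (Fin n → K)) : Prop :=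
  B.Infinite ∧ ∀ x ∈ B, ∀ x' ∈ B, ∀ y : Fin n → K,
    supVal v (x - y) ≤ supVal v (x - x') → y ∈ B

/-- A risometry from `B₁` onto `B₂`. -/
def IsRisometryOn {K Γ₀ : Type*} [Field K] [LinearOrderedCommGroupWithZero Γ₀]
    (v : Valuation K Γ₀) {n : ℕ} (φ : (Fin n → K) → (Fin n → K))
    (B₁ B₂ : Set (Fin n → K)) : Prop :=
  Set.BijOn φ B₁ B₂ ∧
    ∀ x₁ ∈ B₁, ∀ x₂ ∈ B₁, x₁ ≠ x₂ →
      supVal v (φ x₁ - φ x₂ - (x₁ - x₂)) < supVal v (x₁ - x₂)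

/-- `rv⁽ⁿ⁾(a) = rv⁽ⁿ⁾(b)`: equality of leading terms, i.e. `a = b` or `|b − a| < |a|`. -/
def RvEq {K Γ₀ : Type*} [Field K] [LinearOrderedCommGroupWithZero Γ₀]
    (v : Valuation K Γ₀) {n : ℕ} (a b : Fin n → K) : Prop :=
  a = b ∨ supVal v (b - a) < supVal v a

/-- The cut radius of a set `B ⊆ Kⁿ`: the set of values `|x − y|` for `x, y ∈ B`. -/
def cutRadius {K Γ₀ : Type*} [Field K] [LinearOrderedCommGroupWithZero Γ₀]
    (v : Valuation K Γ₀) {n : ℕ} (B : Set (Fin n → K)) : Set Γ₀ :=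
  {γ | ∃ x ∈ B, ∃ y ∈ B, supVal v (x - y) = γ}

section Helpers
variable {K Γ₀ : Type*} [Field K] [LinearOrderedCommGroupWithZero Γ₀]
  (v : Valuation K Γ₀) {n : ℕ}

lemma le_supVal (x : Fin n → K) (i : Fin n) : v (x i) ≤ supVal v x := by
  letI : OrderBot Γ₀ := { bot := 0, bot_le := fun _ => zero_le' }
  exact Finset.le_sup (f := fun i => v (x i)) (Finset.mem_univ i)

lemma supVal_le {x : Fin n → K} {γ : Γ₀} (h : ∀ i, v (x i) ≤ γ) : supVal v x ≤ γ := by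
  letI : OrderBot Γ₀ := { bot := 0, bot_le := fun _ => zero_le' }
  exact Finset.sup_le fun i _ => h i

lemma supVal_eq_zero {x : Fin n → K} : supVal v x = 0 ↔ x = 0 := by
  constructor
  · intro h
    funext i
    have h1 := le_supVal v x i
    rw [h] at h1
    have h2 : v (x i) = 0 := le_antisymm h1 zero_le'
    simpa using (Valuation.zero_iff v).1 h2
  · rintro rfl
    refine le_antisymm (supVal_le v fun i => ?_) zero_le'
    simp

lemma supVal_pos {x : Fin n → K} (hx : x ≠ 0) : 0 < supVal v x := by
  rw [zero_lt_iff]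
  exact fun h => hx ((supVal_eq_zero v).1 h)

lemma supVal_neg (x : Fin n → K) : supVal v (-x) = supVal v x := by
  refine le_antisymm (supVal_le v fun i => ?_) (supVal_le v fun i => ?_)
  · simpa using le_supVal v x i
  · simpa using le_supVal v (-x) i

lemma supVal_sub_comm (x y : Fin n → K) : supVal v (x - y) = supVal v (y - x) := by
  rw [← supVal_neg v (y - x), neg_sub]

lemma supVal_add_le (x y : Fin n → K) :
    supVal v (x + y) ≤ max (supVal v x) (supVal v y) := by
  refine supVal_le v fun i => ?_
  exact (v.map_add (x i) (y i)).trans (max_le_max (le_supVal v x i) (le_supVal v y i))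

lemma supVal_add_eq {x y : Fin n → K} (h : supVal v y < supVal v x) :
    supVal v (x + y) = supVal v x := by
  refine le_antisymm ((supVal_add_le v x y).trans (max_le le_rfl h.le)) ?_
  have h2 : supVal v x ≤ max (supVal v (x + y)) (supVal v y) := by
    have := supVal_add_le v (x + y) (-y)
    rwa [add_neg_cancel_right, supVal_neg] at this
  rcases max_cases (supVal v (x + y)) (supVal v y) with ⟨he, _⟩ | ⟨he, _⟩
  · rwa [he] at h2
  · rw [he] at h2; exact absurd (h2.trans_lt h) (lt_irrefl _)

lemma RvEq.supVal_congr {a b : Fin n → K} (h : RvEq v a b) : supVal v a = supVal v b := by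
  rcases h with rfl | h
  · rfl
  · have : a + (b - a) = b := by abel
    rw [← this, supVal_add_eq v h]

lemma RvEq.trans' {a b c : Fin n → K} (h1 : RvEq v a b) (h2 : RvEq v b c) : RvEq v a c := by
  rcases h1 with rfl | h1
  · exact h2
  · rcases h2 with rfl | h2
    · exact Or.inr h1
    · have hab : supVal v a = supVal v b := RvEq.supVal_congr v (Or.inr h1)
      right
      have : c - a = (c - b) + (b - a) := by abel
      rw [this]
      exact lt_of_le_of_lt (supVal_add_le v _ _) (max_lt (hab ▸ h2) h1)

/-- separation: inside a ball/point `S`, any two points are strictly closer than any outside point. -/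
lemma shape_sep {S : Set (Fin n → K)} (hS : IsBall v S ∨ ∃ p, S = {p})
    {u u' w : Fin n → K} (hu : u ∈ S) (hu' : u' ∈ S) (hw : w ∉ S) :
    supVal v (u - u') < supVal v (u - w) := by
  have huw : u ≠ w := fun h => hw (h ▸ hu)
  rcases hS with hS | ⟨p, rfl⟩
  · by_contra h
    push_neg at h
    exact hw (hS.2 u hu u' hu' w h)
  · simp only [Set.mem_singleton_iff] at hu hu'
    subst hu; subst hu'
    rw [sub_self]
    have h0 : supVal v (0 : Fin n → K) = 0 := (supVal_eq_zero v).2 rfl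
    rw [h0]
    exact supVal_pos v (sub_ne_zero.2 huw)

lemma shape_mem_iff {S : Set (Fin n → K)} (hS : IsBall v S ∨ ∃ p, S = {p})
    {c : Fin n → K} (hc : c ∈ S) (y : Fin n → K) :
    y ∈ S ↔ ∃ γ ∈ cutRadius v S, supVal v (y - c) ≤ γ :=
  by
  constructor
  · intro hy
    exact ⟨supVal v (y - c), ⟨y, hy, c, hc, rfl⟩, le_rfl⟩
  · rintro ⟨γ, ⟨p, hp, q, hq, rfl⟩, hle⟩
    rcases hS with hS | ⟨p₀, rfl⟩
    · have hpq : supVal v (p - q) ≤ max (supVal v (c - p)) (supVal v (c - q)) := by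
        have : p - q = -(c - p) + (c - q) := by abel
        rw [this, ← supVal_neg v (c - p)] at *
        exact supVal_add_le v _ _
      rcases max_cases (supVal v (c - p)) (supVal v (c - q)) with ⟨he, _⟩ | ⟨he, _⟩
      · rw [he] at hpq
        refine hS.2 c hc p hp y ?_
        rw [supVal_sub_comm v c y]
        exact hle.trans hpq
      · rw [he] at hpq
        refine hS.2 c hc q hq y ?_
        rw [supVal_sub_comm v c y]
        exact hle.trans hpq
    · simp only [Set.mem_singleton_iff] at hp hq hc
      subst hp; subst hq; subst hc
      rw [sub_self] at hle
      have h0 : supVal v ((0:Fin n → K)) = 0 := (supVal_eq_zero v).2 rfl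
      rw [h0] at hle
      have : supVal v (y - c) = 0 := le_antisymm hle zero_le'
      have := (supVal_eq_zero v).1 this
      simp only [Set.mem_singleton_iff]
      exact sub_eq_zero.1 this

end Helpers

open Classical in
noncomputable def idxMin {Γ₀ : Type*} [LinearOrder Γ₀] {m : ℕ} (hm : 0 < m)
    (f : Fin m → Γ₀) : Fin m :=
  (Finset.univ.filter fun k => ∀ l, f k ≤ f l).min'
    (by
      obtain ⟨k, -, hk⟩ := Finset.exists_min_image Finset.univ f ⟨⟨0, hm⟩, Finset.mem_univ _⟩
      exact ⟨k, Finset.mem_filter.2 ⟨Finset.mem_univ _, fun l => hk l (Finset.mem_univ _)⟩⟩)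

lemma idxMin_spec {Γ₀ : Type*} [LinearOrder Γ₀] {m : ℕ} (hm : 0 < m) (f : Fin m → Γ₀)
    (l : Fin m) : f (idxMin hm f) ≤ f l := by
  classical
  have := Finset.min'_mem (Finset.univ.filter fun k => ∀ l, f k ≤ f l)
    (by
      obtain ⟨k, -, hk⟩ := Finset.exists_min_image Finset.univ f ⟨⟨0, hm⟩, Finset.mem_univ _⟩
      exact ⟨k, Finset.mem_filter.2 ⟨Finset.mem_univ _, fun l => hk l (Finset.mem_univ _)⟩⟩)
  rw [Finset.mem_filter] at this
  exact this.2 l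

lemma idxMin_eq {Γ₀ : Type*} [LinearOrder Γ₀] {m : ℕ} (hm : 0 < m) (f : Fin m → Γ₀)
    {i : Fin m} (h : ∀ l, l ≠ i → f i < f l) : idxMin hm f = i := by
  by_contra hne
  exact absurd (idxMin_spec hm f i) (not_le.2 (h _ hne))

/-- given two families `B₁ ∪ … ∪ B_m ⊆ B₀` and `B'₁ ∪ … ∪ B'_m ⊆ B₀`
of pairwise disjoint points and balls of a valued field of equi-characteristic 0,
there is a risometry `φ : B₀ → B₀` with `φ(Bᵢ) = B'ᵢ` for all `i` iff
(a) `Bᵢ` and `B'ᵢ` have the same cut-radius for each `i`, and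
(b) `rv(Bᵢ − Bⱼ) = rv(B'ᵢ − B'ⱼ)` for all `i ≠ j`. -/
theorem finite_union_risometry_iff {K Γ₀ : Type*} [Field K]
    [LinearOrderedCommGroupWithZero Γ₀] (v : Valuation K Γ₀) [CharZero K]
    (hres : ∀ m : ℕ, m ≠ 0 → v (m : K) = 1)
    {n m : ℕ} (B₀ : Set (Fin n → K)) (hB₀ : IsBall v B₀)
    (B B' : Fin m → Set (Fin n → K))
    (hBsub : ∀ i, B i ⊆ B₀) (hB'sub : ∀ i, B' i ⊆ B₀)
    (hBshape : ∀ i, IsBall v (B i) ∨ ∃ p, B i = {p})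
    (hB'shape : ∀ i, IsBall v (B' i) ∨ ∃ p, B' i = {p})
    (hBdisj : ∀ i j, i ≠ j → Disjoint (B i) (B j))
    (hB'disj : ∀ i j, i ≠ j → Disjoint (B' i) (B' j)) :
    (∃ φ, IsRisometryOn v φ B₀ B₀ ∧ ∀ i, φ '' B i = B' i) ↔
      ((∀ i, cutRadius v (B i) = cutRadius v (B' i)) ∧
        ∀ i j, i ≠ j → ∀ x ∈ B i, ∀ y ∈ B j, ∀ x' ∈ B' i, ∀ y' ∈ B' j,
          RvEq v (x - y) (x' - y')) := by
  classical
  constructor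
  · rintro ⟨φ, ⟨hbij, hriso⟩, himg⟩
    have hkey : ∀ x ∈ B₀, ∀ y ∈ B₀, x ≠ y → RvEq v (x - y) (φ x - φ y) := by
      intro x hx y hy hne
      right
      exact hriso x hx y hy hne
    constructor
    · intro i
      ext γ
      simp only [cutRadius, Set.mem_setOf_eq]
      constructor
      · rintro ⟨x, hx, y, hy, rfl⟩
        by_cases hxy : x = y
        · subst hxy
          refine ⟨φ x, ?_, φ x, ?_, by rw [sub_self, sub_self]⟩ <;>
            · rw [← himg i]; exact ⟨x, hx, rfl⟩
        · refine ⟨φ x, ?_, φ y, ?_, ?_⟩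
          · rw [← himg i]; exact ⟨x, hx, rfl⟩
          · rw [← himg i]; exact ⟨y, hy, rfl⟩
          · exact (RvEq.supVal_congr v (hkey x (hBsub i hx) y (hBsub i hy) hxy)).symm
      · rintro ⟨x', hx', y', hy', rfl⟩
        rw [← himg i] at hx' hy'
        obtain ⟨x, hx, rfl⟩ := hx'
        obtain ⟨y, hy, rfl⟩ := hy'
        by_cases hxy : x = y
        · subst hxy
          exact ⟨x, hx, x, hx, by rw [sub_self, sub_self]⟩
        · exact ⟨x, hx, y, hy,
            RvEq.supVal_congr v (hkey x (hBsub i hx) y (hBsub i hy) hxy)⟩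
    · intro i j hij x hx y hy x' hx' y' hy'
      have hφx : φ x ∈ B' i := by rw [← himg i]; exact ⟨x, hx, rfl⟩
      have hφy : φ y ∈ B' j := by rw [← himg j]; exact ⟨y, hy, rfl⟩
      have hxy : x ≠ y := fun h => Set.disjoint_left.mp (hBdisj i j hij) hx (h ▸ hy)
      have h1 : RvEq v (x - y) (φ x - φ y) := hkey x (hBsub i hx) y (hBsub j hy) hxy
      have h2 : RvEq v (φ x - φ y) (φ x - y') := by
        right
        have e : φ x - y' - (φ x - φ y) = φ y - y' := by abel
        rw [e]
        have := shape_sep v (hB'shape j) hφy hy'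
          (Set.disjoint_left.mp (hB'disj i j hij) hφx)
        rwa [supVal_sub_comm v (φ y) (φ x)] at this
      have h3 : RvEq v (φ x - y') (x' - y') := by
        right
        have e : x' - y' - (φ x - y') = x' - φ x := by abel
        rw [e, supVal_sub_comm v x' (φ x)]
        exact shape_sep v (hB'shape i) hφx hx'
          (Set.disjoint_right.mp (hB'disj i j hij) hy')
      exact RvEq.trans' v (RvEq.trans' v h1 h2) h3
  · rintro ⟨hcut, hrv⟩
    rcases Nat.eq_zero_or_pos m with hm | hm
    · subst hm
      refine ⟨id, ⟨⟨fun x hx => hx, fun x _ y _ h => h, fun y hy => ⟨y, hy, rfl⟩⟩, ?_⟩,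
        fun i => i.elim0⟩
      intro x₁ _ x₂ _ hne
      simp only [id_eq]
      rw [sub_self, (supVal_eq_zero v).2 rfl]
      exact supVal_pos v (sub_ne_zero.2 hne)
    · have hBne : ∀ i, (B i).Nonempty := fun i => by
        rcases hBshape i with h | ⟨p, hp⟩
        · exact h.1.nonempty
        · exact hp ▸ ⟨p, rfl⟩
      have hB'ne : ∀ i, (B' i).Nonempty := fun i => by
        rcases hB'shape i with h | ⟨p, hp⟩
        · exact h.1.nonempty
        · exact hp ▸ ⟨p, rfl⟩
      choose a ha using hBne
      choose a' ha' using hB'ne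
      set t : Fin m → (Fin n → K) := fun i => a' i - a i with ht
      have haB : ∀ i, a i ∈ B₀ := fun i => hBsub i (ha i)
      have ha'B : ∀ i, a' i ∈ B₀ := fun i => hB'sub i (ha' i)
      have etrans : ∀ (i : Fin m) (x : Fin n → K), x + t i - a' i = x - a i := by
        intro i x; simp only [ht]; abel
      have htrans : ∀ (i : Fin m) (x : Fin n → K), x ∈ B i ↔ x + t i ∈ B' i := by
        intro i x
        rw [shape_mem_iff v (hBshape i) (ha i) x,
          shape_mem_iff v (hB'shape i) (ha' i) (x + t i), ← hcut i, etrans i x]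
      have hsep : ∀ i, ∀ x ∈ B i, ∀ k, k ≠ i →
          supVal v (x - a i) < supVal v (x - a k) := by
        intro i x hx k hk
        exact shape_sep v (hBshape i) hx (ha i)
          (fun hmem => Set.disjoint_left.mp (hBdisj k i hk) (ha k) hmem)
      have hAA' : ∀ i j, i ≠ j → RvEq v (a i - a j) (a' i - a' j) :=
        fun i j hij => hrv i j hij (a i) (ha i) (a j) (ha j) (a' i) (ha' i) (a' j) (ha' j)
      have haa : ∀ i j, i ≠ j → supVal v (a i - a j) = supVal v (a' i - a' j) :=
        fun i j hij => RvEq.supVal_congr v (hAA' i j hij)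
      have hTlt : ∀ i j, i ≠ j → t i ≠ t j →
          supVal v (t i - t j) < supVal v (a i - a j) := by
        intro i j hij htij
        rcases hAA' i j hij with he | hlt
        · exfalso
          apply htij
          have e2 : t i - t j = a' i - a' j - (a i - a j) := by simp only [ht]; abel
          rw [he, sub_self] at e2
          exact sub_eq_zero.1 e2
        · have e2 : a' i - a' j - (a i - a j) = t i - t j := by simp only [ht]; abel
          rwa [e2] at hlt
      set I : (Fin n → K) → Fin m := fun x => idxMin hm (fun k => supVal v (x - a k))
        with hI
      set I' : (Fin n → K) → Fin m := fun y => idxMin hm (fun k => supVal v (y - a' k))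
        with hI'
      set φ : (Fin n → K) → (Fin n → K) := fun x => x + t (I x) with hφ
      set ψ : (Fin n → K) → (Fin n → K) := fun y => y - t (I' y) with hψ
      have hIspec : ∀ x k, supVal v (x - a (I x)) ≤ supVal v (x - a k) := by
        intro x k
        simp only [hI]
        exact idxMin_spec hm (fun k => supVal v (x - a k)) k
      have hI'spec : ∀ y k, supVal v (y - a' (I' y)) ≤ supVal v (y - a' k) := by
        intro y k
        simp only [hI']
        exact idxMin_spec hm (fun k => supVal v (y - a' k)) k
      have hIB : ∀ i, ∀ x ∈ B i, I x = i := by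
        intro i x hx
        simp only [hI]
        exact idxMin_eq hm (fun k => supVal v (x - a k)) (fun l hl => hsep i x hx l hl)
      have hprof : ∀ x k, supVal v (φ x - a' k) = supVal v (x - a k) := by
        intro x k
        simp only [hφ]
        by_cases htk : t (I x) = t k
        · have e : x + t (I x) - a' k = x - a k := by rw [htk]; simp only [ht]; abel
          rw [e]
        · have hik : I x ≠ k := fun h => htk (by rw [h])
          have hlt : supVal v (t (I x) - t k) < supVal v (x - a k) := by
            refine (hTlt _ _ hik htk).trans_le ?_
            have e2 : a (I x) - a k = -(x - a (I x)) + (x - a k) := by abel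
            rw [e2]
            refine (supVal_add_le v _ _).trans ?_
            rw [supVal_neg]
            exact max_le (hIspec x k) le_rfl
          have e : x + t (I x) - a' k = (x - a k) + (t (I x) - t k) := by
            simp only [ht]; abel
          rw [e, supVal_add_eq v hlt]
      have hprof' : ∀ y k, supVal v (ψ y - a k) = supVal v (y - a' k) := by
        intro y k
        simp only [hψ]
        by_cases htk : t (I' y) = t k
        · have e : y - t (I' y) - a k = y - a' k := by rw [htk]; simp only [ht]; abel
          rw [e]
        · have hik : I' y ≠ k := fun h => htk (by rw [h])
          have hlt : supVal v (t k - t (I' y)) < supVal v (y - a' k) := by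
            refine (hTlt k (I' y) (Ne.symm hik) (fun h => htk h.symm)).trans_le ?_
            rw [haa k (I' y) (Ne.symm hik)]
            have e2 : a' k - a' (I' y) = -(y - a' k) + (y - a' (I' y)) := by abel
            rw [e2]
            refine (supVal_add_le v _ _).trans ?_
            rw [supVal_neg]
            exact max_le le_rfl (hI'spec y k)
          have e : y - t (I' y) - a k = (y - a' k) + (t k - t (I' y)) := by
            simp only [ht]; abel
          rw [e, supVal_add_eq v hlt]
      have hI'φ : ∀ x, I' (φ x) = I x := by
        intro x
        have hall : (fun k => supVal v (φ x - a' k)) = (fun k => supVal v (x - a k)) := by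
          funext k; exact hprof x k
        simp only [hI', hI]
        rw [hall]
      have hIψ : ∀ y, I (ψ y) = I' y := by
        intro y
        have hall : (fun k => supVal v (ψ y - a k)) = (fun k => supVal v (y - a' k)) := by
          funext k; exact hprof' y k
        simp only [hI, hI']
        rw [hall]
      have hψφ : ∀ x, ψ (φ x) = x := by
        intro x
        simp only [hψ]; rw [hI'φ]; simp only [hφ]
        abel
      have hφψ : ∀ y, φ (ψ y) = y := by
        intro y
        simp only [hφ]; rw [hIψ]; simp only [hψ]
        abel
      have hmem : ∀ x ∈ B₀, ∀ i, x + t i ∈ B₀ := by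
        intro x hx i
        have e : x - (x + t i) = -(t i) := by abel
        rcases le_or_gt (supVal v (t i)) (supVal v (x - a i)) with hle | hlt
        · refine hB₀.2 x hx (a i) (haB i) _ ?_
          rw [e, supVal_neg]
          exact hle
        · refine hB₀.2 x hx (a' i) (ha'B i) _ ?_
          rw [e, supVal_neg]
          have e2 : x - a' i = -(t i) + (x - a i) := by simp only [ht]; abel
          have h3 : supVal v (x - a i) < supVal v (-(t i)) := by
            rw [supVal_neg]; exact hlt
          rw [e2, supVal_add_eq v h3, supVal_neg]
      have hmem' : ∀ y ∈ B₀, ∀ i, y - t i ∈ B₀ := by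
        intro y hy i
        have e : y - (y - t i) = t i := by abel
        rcases le_or_gt (supVal v (t i)) (supVal v (y - a' i)) with hle | hlt
        · refine hB₀.2 y hy (a' i) (ha'B i) _ ?_
          rw [e]
          exact hle
        · refine hB₀.2 y hy (a i) (haB i) _ ?_
          rw [e]
          have e2 : y - a i = t i + (y - a' i) := by simp only [ht]; abel
          rw [e2, supVal_add_eq v hlt]
      have hkey : ∀ x₁ x₂ : Fin n → K, x₁ ≠ x₂ →
          supVal v (φ x₁ - φ x₂ - (x₁ - x₂)) < supVal v (x₁ - x₂) := by
        intro x₁ x₂ hne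
        have e : φ x₁ - φ x₂ - (x₁ - x₂) = t (I x₁) - t (I x₂) := by
          simp only [hφ]; abel
        rw [e]
        by_cases htt : t (I x₁) = t (I x₂)
        · rw [htt, sub_self, (supVal_eq_zero v).2 rfl]
          exact supVal_pos v (sub_ne_zero.2 hne)
        · have hij : I x₁ ≠ I x₂ := fun h => htt (by rw [h])
          rcases le_or_gt (supVal v (x₁ - a (I x₁))) (supVal v (x₁ - x₂)) with hc | hc
          · have h1 : supVal v (x₂ - a (I x₁)) ≤ supVal v (x₁ - x₂) := by
              have e1 : x₂ - a (I x₁) = -(x₁ - x₂) + (x₁ - a (I x₁)) := by abel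
              rw [e1]
              exact (supVal_add_le v _ _).trans
                (by rw [supVal_neg]; exact max_le le_rfl hc)
            have h2 : supVal v (x₂ - a (I x₂)) ≤ supVal v (x₁ - x₂) :=
              (hIspec x₂ (I x₁)).trans h1
            have h3 : supVal v (x₁ - a (I x₂)) ≤ supVal v (x₁ - x₂) := by
              have e1 : x₁ - a (I x₂) = (x₁ - x₂) + (x₂ - a (I x₂)) := by abel
              rw [e1]
              exact (supVal_add_le v _ _).trans (max_le le_rfl h2)
            have h4 : supVal v (a (I x₁) - a (I x₂)) ≤ supVal v (x₁ - x₂) := by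
              have e1 : a (I x₁) - a (I x₂) = -(x₁ - a (I x₁)) + (x₁ - a (I x₂)) := by
                abel
              rw [e1]
              exact (supVal_add_le v _ _).trans
                (by rw [supVal_neg]; exact max_le hc h3)
            exact (hTlt _ _ hij htt).trans_le h4
          · exfalso
            apply hij
            have hall : (fun k => supVal v (x₁ - a k)) = (fun k => supVal v (x₂ - a k)) := by
              funext k
              have hlt : supVal v (x₂ - x₁) < supVal v (x₁ - a k) := by
                rw [supVal_sub_comm]
                exact hc.trans_le (hIspec x₁ k)
              have e1 : x₂ - a k = (x₁ - a k) + (x₂ - x₁) := by abel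
              rw [e1, supVal_add_eq v hlt]
            simp only [hI]
            rw [hall]
      have hmapsφ : Set.MapsTo φ B₀ B₀ := by
        intro x hx
        show φ x ∈ B₀
        simp only [hφ]
        exact hmem x hx (I x)
      have hmapsψ : Set.MapsTo ψ B₀ B₀ := by
        intro y hy
        show ψ y ∈ B₀
        simp only [hψ]
        exact hmem' y hy (I' y)
      have hinj : Set.InjOn φ B₀ := by
        intro p _ q _ hpq
        have h := congrArg ψ hpq
        rwa [hψφ, hψφ] at h
      have hsurj : Set.SurjOn φ B₀ B₀ := fun y hy => ⟨ψ y, hmapsψ hy, hφψ y⟩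
      refine ⟨φ, ⟨⟨hmapsφ, hinj, hsurj⟩, fun x₁ _ x₂ _ hne => hkey x₁ x₂ hne⟩, fun i => ?_⟩
      ext y
      constructor
      · rintro ⟨x, hx, rfl⟩
        have hφx : φ x = x + t i := by simp only [hφ, hIB i x hx]
        rw [hφx]
        exact (htrans i x).1 hx
      · intro hy
        have hyt : y - t i + t i = y := by abel
        have hxB : y - t i ∈ B i := (htrans i (y - t i)).2 (by rw [hyt]; exact hy)
        exact ⟨y - t i, hxB, by simp only [hφ, hIB i _ hxB]; exact hyt⟩
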